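/- arXiv:1110.3113 — 6 statements merged into one kernel-verified Lean document; each statement's English description precedes it below -/
import Mathlib

section
/- For every odd prime p, the sum over a from 1 to p-1 of the Fermat quotients q_p(a) is congruent to the Wilson quotient w_p modulo p; equivalently, (∑_{a=1}^{p-1} a^(p-1)) - p - (p-1)! ≡ 0 (mod p²). -/
/-!
Write `F = (p-1)!`. By Fermat each `a ^ (p-1)` is `1 + p q_a`, and a product of elements
`≡ 1 (mod p)` is, modulo `p²`, one plus the sum of their excesses over `1`; so
`F ^ (p-1) = ∏ a ^ (p-1) ≡ 1 + p ∑ q_a`. By Wilson `F = -1 + p w_p`, and since `p - 1` is even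
the binomial theorem gives `F ^ (p-1) ≡ 1 - (p-1) p w_p ≡ 1 + p w_p (mod p²)`.
-/

open Finset
open scoped Nat

theorem sq_dvd_prod_sub_one_sub_sum {ι R : Type*} [CommRing R] {n : R} (s : Finset ι)
    (f : ι → R) (h : ∀ i ∈ s, n ∣ f i - 1) :
    n ^ 2 ∣ ∏ i ∈ s, f i - 1 - ∑ i ∈ s, (f i - 1) := by
  classical
  induction s using Finset.induction_on with
  | empty => simp
  | @insert a s ha ih =>
    have hs : ∀ i ∈ s, n ∣ f i - 1 := fun i hi => h i (mem_insert_of_mem hi)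
    have hprod : n ∣ ∏ i ∈ s, f i - 1 := by
      simpa using dvd_add (dvd_trans (dvd_pow_self n two_ne_zero) (ih hs)) (dvd_sum hs)
    rw [prod_insert ha, sum_insert ha]
    have key : f a * ∏ i ∈ s, f i - 1 - (f a - 1 + ∑ i ∈ s, (f i - 1)) =
        (f a - 1) * (∏ i ∈ s, f i - 1) + (∏ i ∈ s, f i - 1 - ∑ i ∈ s, (f i - 1)) := by ring
    rw [key]
    exact dvd_add (sq n ▸ mul_dvd_mul (h a (mem_insert_self a s)) hprod) (ih hs)

theorem sq_dvd_pow_sub_one_add_mul_of_even {R : Type*} [CommRing R] {n x : R} {k : ℕ}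
    (hk : Even k) (hx : n ∣ x + 1) : n ^ 2 ∣ x ^ k - 1 + k * (x + 1) := by
  rcases eq_or_ne k 0 with rfl | hk0
  · simp
  have hodd : Odd (k - 1) := Nat.Even.sub_odd (by omega) hk odd_one
  have := sq_dvd_add_pow_sub_sub (x + 1) (-1) k
  rw [hodd.neg_one_pow, hk.neg_one_pow] at this
  convert dvd_trans (pow_dvd_pow_of_dvd hx 2) this using 1
  ring

theorem Int.natCast_dvd_factorial_sub_one_add_one {p : ℕ} (hp : p.Prime) :
    (p : ℤ) ∣ ((p - 1)! : ℤ) + 1 := by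
  have := Fact.mk hp
  rw [← ZMod.intCast_zmod_eq_zero_iff_dvd]
  push_cast
  rw [ZMod.wilsons_lemma, neg_add_cancel]

theorem Int.natCast_dvd_pow_sub_one_sub_one {p a : ℕ} (hp : p.Prime) (ha : a ∈ Icc 1 (p - 1)) :
    (p : ℤ) ∣ (a : ℤ) ^ (p - 1) - 1 := by
  rw [mem_Icc] at ha
  have hcop : IsCoprime (a : ℤ) p :=
    Nat.isCoprime_iff_coprime.mpr (Nat.coprime_of_lt_prime (by omega) (by omega) hp).symm
  exact (Int.ModEq.pow_card_sub_one_eq_one hp hcop).symm.dvd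

theorem prod_Icc_pow_eq_factorial_pow {R : Type*} [CommSemiring R] (n k : ℕ) :
    ∏ a ∈ Icc 1 n, (a : R) ^ k = (n ! : R) ^ k := by
  rw [prod_pow, ← Nat.cast_prod, ← prod_Ico_id_eq_factorial, Ico_add_one_right_eq_Icc]

theorem lerch_formula (p : ℕ) (hp : p.Prime) (hodd : Odd p) :
    ((p : ℤ) ^ 2) ∣ (∑ a ∈ Finset.Icc 1 (p - 1), (a : ℤ) ^ (p - 1)) - p
      - ((p - 1).factorial : ℤ) := by
  have hwilson := Int.natCast_dvd_factorial_sub_one_add_one hp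
  have hfermat := sq_dvd_prod_sub_one_sub_sum _ _ fun a ha ↦
    Int.natCast_dvd_pow_sub_one_sub_one hp ha
  have hbinom := sq_dvd_pow_sub_one_add_mul_of_even (hodd.tsub_odd odd_one) hwilson
  rw [prod_Icc_pow_eq_factorial_pow, sum_sub_distrib, sum_const, Nat.card_Icc,
    Nat.add_sub_cancel, nsmul_one] at hfermat
  have hp1 : ((p - 1 : ℕ) : ℤ) = p - 1 := by push_cast [hp.one_le]; ring
  rw [hp1] at hfermat hbinom
  have hwilson_sq : (p : ℤ) ^ 2 ∣ p * ((p - 1)! + 1) := by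
    rw [sq]
    exact mul_dvd_mul_left _ hwilson
  refine (dvd_sub (dvd_sub hbinom hfermat) hwilson_sq).trans (dvd_of_eq ?_)
  ring
end

section
/- For every odd prime p, the quantity ℓ_p := ((∑_{a=1}^{p-1} a^(p-1)) - p - (p-1)!)/p² is an integer (the Lerch quotient). -/
/-!
Write `a ^ (p - 1) = 1 + p q(a)` (Fermat quotients) and `(p - 1)! = p w - 1` (Wilson quotient).
Computing `((p - 1)!) ^ (p - 1) = ∏ a ^ (p - 1)` modulo `p²` in two ways gives
`1 + p ∑ q(a) ≡ 1 + p w`: on the left the product of the `1 + p q(a)` is `1 + p ∑ q(a)` up to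
products of two multiples of `p`, on the right `(p w - 1) ^ (p - 1) = (1 - p w) ^ (p - 1)` since
`p - 1` is even, and the binomial theorem gives `1 - (p - 1) p w ≡ 1 + p w`. Hence
`∑ a ^ (p - 1) - p - (p - 1)! = p (∑ q(a) - w)` is divisible by `p²`.
-/

open Finset Nat

theorem sq_dvd_prod_one_add_mul_sub {R ι : Type*} [CommRing R] (s : Finset ι) (f : ι → R)
    (x : R) : x ^ 2 ∣ ∏ i ∈ s, (1 + x * f i) - (1 + x * ∑ i ∈ s, f i) := by
  classical
  induction s using Finset.induction with
  | empty => simp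
  | insert i s hi ih =>
    rw [prod_insert hi, sum_insert hi]
    have key : (1 + x * f i) * ∏ j ∈ s, (1 + x * f j) - (1 + x * (f i + ∑ j ∈ s, f j))
        = (1 + x * f i) * (∏ j ∈ s, (1 + x * f j) - (1 + x * ∑ j ∈ s, f j))
          + x ^ 2 * (f i * ∑ j ∈ s, f j) := by ring
    rw [key]
    exact dvd_add (dvd_mul_of_dvd_right ih _) (dvd_mul_right _ _)

theorem Int.mul_sub_one_pow_pred_modEq_of_odd {p : ℕ} (hodd : Odd p) (w : ℤ) :
    (p * w - 1) ^ (p - 1) ≡ 1 + p * w [ZMOD p ^ 2] := by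
  have even_pow : (p * w - 1) ^ (p - 1) = (1 + p * -w) ^ (p - 1) := by
    rw [← (Nat.Odd.sub_odd hodd odd_one).neg_pow]
    ring
  have binomial := sq_dvd_prod_one_add_mul_sub (Finset.range (p - 1)) (fun _ ↦ -w) (p : ℤ)
  rw [prod_const, sum_const, card_range, ← even_pow, nsmul_eq_mul, Nat.cast_pred hodd.pos,
    dvd_sub_comm] at binomial
  rw [Int.modEq_iff_dvd]
  exact (dvd_add binomial (dvd_mul_right _ w)).trans (dvd_of_eq (by ring))

def fermatQuotient (p : ℕ) (a : ℤ) : ℤ := (a ^ (p - 1) - 1) / p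

theorem pow_pred_eq_one_add_mul_fermatQuotient {p : ℕ} (hp : p.Prime) {a : ℤ}
    (ha : IsCoprime a p) : a ^ (p - 1) = 1 + p * fermatQuotient p a := by
  rw [fermatQuotient, Int.mul_ediv_cancel' (Int.prime_dvd_pow_sub_one hp ha)]
  ring

def wilsonQuotient (p : ℕ) : ℤ := ((p - 1)! + 1) / p

theorem factorial_pred_eq_mul_wilsonQuotient_sub_one {p : ℕ} (hp : p.Prime) :
    ((p - 1)! : ℤ) = p * wilsonQuotient p - 1 := by
  have := Fact.mk hp
  have wilson : (p : ℤ) ∣ (p - 1)! + 1 := by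
    rw [← ZMod.intCast_zmod_eq_zero_iff_dvd]
    push_cast
    rw [ZMod.wilsons_lemma, neg_add_cancel]
  rw [wilsonQuotient, Int.mul_ediv_cancel' wilson]
  ring

theorem Nat.Prime.isCoprime_of_mem_Icc {p a : ℕ} (hp : p.Prime) (ha : a ∈ Icc 1 (p - 1)) :
    IsCoprime (a : ℤ) p := by
  rw [mem_Icc] at ha
  refine Nat.isCoprime_iff_coprime.2 (Nat.coprime_comm.1 ((hp.coprime_iff_not_dvd).2 ?_))
  exact Nat.not_dvd_of_pos_of_lt ha.1 (by omega)

theorem factorial_pred_pow_modEq_one_add_mul_sum_fermatQuotient {p : ℕ} (hp : p.Prime) :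
    ((p - 1)! : ℤ) ^ (p - 1) ≡ 1 + p * ∑ a ∈ Icc 1 (p - 1), fermatQuotient p a [ZMOD p ^ 2] := by
  have factorial_eq_prod : ((p - 1)! : ℤ) = ∏ a ∈ Icc 1 (p - 1), (a : ℤ) := by
    rw [← Nat.cast_prod, ← Ico_add_one_right_eq_Icc, prod_Ico_id_eq_factorial]
  rw [factorial_eq_prod, ← prod_pow, Int.modEq_comm, Int.modEq_iff_dvd,
    prod_congr rfl fun a ha ↦
      pow_pred_eq_one_add_mul_fermatQuotient hp (hp.isCoprime_of_mem_Icc ha)]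
  exact sq_dvd_prod_one_add_mul_sub _ _ _

theorem lerch_quotient_is_integer (p : ℕ) (hp : p.Prime) (hodd : Odd p) :
    ((p : ℤ) ^ 2) ∣ (∑ a ∈ Finset.Icc 1 (p - 1), (a : ℤ) ^ (p - 1)) - p
      - ((p - 1).factorial : ℤ) := by
  have sum_eq : ∑ a ∈ Icc 1 (p - 1), (a : ℤ) ^ (p - 1)
      = (p - 1 : ℕ) + p * ∑ a ∈ Icc 1 (p - 1), fermatQuotient p a := by
    rw [sum_congr rfl fun a ha ↦
        pow_pred_eq_one_add_mul_fermatQuotient hp (hp.isCoprime_of_mem_Icc ha),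
      sum_add_distrib, sum_const, card_Icc, mul_sum]
    simp
  have two_ways : 1 + p * wilsonQuotient p ≡ 1 + p * ∑ a ∈ Icc 1 (p - 1), fermatQuotient p a
      [ZMOD p ^ 2] := by
    refine (Int.mul_sub_one_pow_pred_modEq_of_odd hodd _).symm.trans ?_
    rw [← factorial_pred_eq_mul_wilsonQuotient_sub_one hp]
    exact factorial_pred_pow_modEq_one_add_mul_sum_fermatQuotient hp
  rw [sum_eq, factorial_pred_eq_mul_wilsonQuotient_sub_one hp, Nat.cast_pred hp.pos]
  exact (Int.modEq_iff_dvd.1 (two_ways.add_left_cancel' 1)).trans (dvd_of_eq (by ring))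
end

section
/- For every prime p > 3, the congruence (B+p)^p ≡ p²·B_{p-1} (mod p⁴) holds, where (B+p)^p denotes the symbolic expansion ∑_{k=0}^{p} C(p,k) p^(p-k) B_k with B_k the k-th Bernoulli number; precisely, the rational number ∑_{k=0}^{p} C(p,k) p^(p-k) B_k − p² B_{p-1} has numerator divisible by p⁴ (when written in lowest terms with denominator coprime to p). -/
/-!
The terms `k = p - 2` and `k = p` vanish because odd-index Bernoulli numbers beyond `B₁` are
zero, and the term `k = p - 1` is exactly `p² B_{p-1}`. Every remaining term has `k ≤ p - 3`, so
`C(p, k) p^(p-k)` is divisible by `p⁴` (by `p^p` when `k = 0`, by `p · p³` otherwise), while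
`B_k` is `p`-integral by von Staudt–Clausen. The ultrametric inequality for `padicNorm p`
finishes.
-/

open Finset

namespace padicNorm

variable {p : ℕ} [Fact p.Prime]

theorem pow_dvd_num_of_le {n : ℕ} {q : ℚ} (h : padicNorm p q ≤ (p : ℚ) ^ (-n : ℤ)) :
    (p : ℤ) ^ n ∣ q.num := by
  have hnum : padicNorm p q.num ≤ (p : ℚ) ^ (-n : ℤ) := by
    rw [← Rat.mul_den_eq_num, padicNorm.mul]
    exact (mul_le_of_le_one_right (padicNorm.nonneg _) (padicNorm.of_nat _)).trans h
  exact_mod_cast padicNorm.dvd_iff_norm_le.mpr hnum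

theorem bernoulli_le_one {n : ℕ} (hn : n + 1 < p) : padicNorm p (bernoulli n) ≤ 1 := by
  obtain ⟨k, rfl | rfl⟩ := Nat.even_or_odd' n
  · obtain ⟨z, hz⟩ := Bernoulli.vonStaudt_clausen k
    rw [eq_sub_of_add_eq hz.symm]
    refine padicNorm.sub.trans (max_le (padicNorm.of_int z) (sum_le' (fun q hq => ?_) zero_le_one))
    -- every prime `q` in the von Staudt–Clausen sum is smaller than `p`
    obtain ⟨hq, hq_prime, -⟩ := mem_filter.mp hq
    have := Fact.mk hq_prime
    rw [padicNorm.div, padicNorm.one, padicNorm_of_prime_of_ne (by grind), div_one]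
  · rcases Nat.eq_zero_or_pos k with rfl | hk
    · have hp2 : p ≠ 2 := by omega
      have := Fact.mk Nat.prime_two
      rw [bernoulli_one, padicNorm.div, padicNorm.neg, padicNorm.one,
        show (2 : ℚ) = (2 : ℕ) by norm_num, padicNorm_of_prime_of_ne hp2, div_one]
    · rw [bernoulli_eq_zero_of_odd (odd_two_mul_add_one k) (by omega), padicNorm.zero]
      exact zero_le_one

end padicNorm

theorem Nat.Prime.pow_four_dvd_choose_mul_pow {p k : ℕ} (hp : p.Prime) (h4 : 4 ≤ p)
    (hk : k + 3 ≤ p) : p ^ 4 ∣ p.choose k * p ^ (p - k) := by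
  rcases Nat.eq_zero_or_pos k with rfl | hk0
  · simpa using Nat.pow_dvd_pow p h4
  · rw [pow_succ']
    exact mul_dvd_mul (hp.dvd_choose_self hk0.ne' (by omega)) (Nat.pow_dvd_pow p (by omega))

theorem padicNorm_choose_mul_pow_mul_bernoulli_le {p k : ℕ} [Fact p.Prime] (h4 : 4 ≤ p)
    (hk : k + 3 ≤ p) :
    padicNorm p ((p.choose k : ℚ) * (p : ℚ) ^ (p - k) * bernoulli k) ≤
      (p : ℚ) ^ (-4 : ℤ) := by
  have hint : padicNorm p ((p.choose k * p ^ (p - k) : ℕ) : ℤ) ≤ (p : ℚ) ^ (-4 : ℤ) :=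
    padicNorm.dvd_iff_norm_le.mp <| by
      exact_mod_cast (Fact.out : p.Prime).pow_four_dvd_choose_mul_pow h4 hk
  push_cast at hint
  have hB : padicNorm p (bernoulli k) ≤ 1 := padicNorm.bernoulli_le_one (by omega)
  rw [padicNorm.mul]
  exact (mul_le_of_le_one_right (padicNorm.nonneg _) hB).trans hint

theorem sum_choose_mul_pow_mul_bernoulli_sub {p : ℕ} (hodd : Odd p) (h3 : 3 < p) :
    ∑ k ∈ range (p + 1), (p.choose k : ℚ) * (p : ℚ) ^ (p - k) * bernoulli k
        - (p : ℚ) ^ 2 * bernoulli (p - 1)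
      = ∑ k ∈ range (p - 2), (p.choose k : ℚ) * (p : ℚ) ^ (p - k) * bernoulli k := by
  obtain ⟨n, rfl⟩ : ∃ n, p = n + 3 := ⟨p - 3, by omega⟩
  have hB : bernoulli (n + 1) = 0 := bernoulli_eq_zero_of_odd (by grind) (by omega)
  rw [sum_range_succ, sum_range_succ, sum_range_succ, hB, bernoulli_eq_zero_of_odd hodd (by omega),
    Nat.choose_succ_self_right]
  simp only [show n + 3 - (n + 2) = 1 by omega, show n + 3 - 2 = n + 1 by omega]
  push_cast
  ring

theorem symbolic_expansion_cong (p : ℕ) (hp : p.Prime) (h3 : 3 < p) :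
    ((p : ℤ) ^ 4) ∣
      ((∑ k ∈ Finset.range (p + 1),
          (p.choose k : ℚ) * (p : ℚ) ^ (p - k) * bernoulli k)
        - (p : ℚ) ^ 2 * bernoulli (p - 1)).num := by
  have := Fact.mk hp
  rw [sum_choose_mul_pow_mul_bernoulli_sub (hp.odd_of_ne_two (by omega)) h3]
  refine padicNorm.pow_dvd_num_of_le (padicNorm.sum_le' (fun k hk => ?_) (by positivity))
  exact padicNorm_choose_mul_pow_mul_bernoulli_le h3 (by grind)
end

section
/- A prime p > 3 is a Lerch prime if and only if p·B_{p-1} ≡ p + (p-1)! (mod p³), where the congruence of rational numbers means p³ divides the numerator of p·B_{p-1} − p − (p-1)! in lowest terms. -/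
/-!
Faulhaber's formula with `n = p` reads
`∑_{a<p} a^(p-1) - p B_{p-1} = ∑_{i<p-1} B_i C(p,i) p^(p-1-i)`.
For `0 < i < p - 1` we have `p - 1 ∤ i`, so `B_i` is `p`-integral by von Staudt–Clausen, and
`p ∣ C(p,i)`; hence every term with `i ≤ p - 3` is `p^3` times a `p`-integral number
(for `i = 0` because `p ≥ 5`), while the term `i = p - 2` vanishes as `p - 2 > 1` is odd.
So the two sides of the test differ by a rational of `p`-adic norm at most `p^(-3)`, and both
divisibilities by `p^3` say exactly that the respective side has `p`-adic norm at most `p^(-3)`.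
-/

open Finset

namespace LerchPrime

variable {p : ℕ} [Fact p.Prime]

theorem padicNorm_le_iff_of_padicNorm_sub_le {x y r : ℚ} (h : padicNorm p (x - y) ≤ r) :
    padicNorm p x ≤ r ↔ padicNorm p y ≤ r := by
  constructor <;> intro hle
  · simpa using padicNorm.sub.trans (max_le hle h)
  · simpa using padicNorm.nonarchimedean.trans (max_le hle h)

theorem pow_dvd_iff_padicNorm_le {n : ℕ} (z : ℤ) :
    (p : ℤ) ^ n ∣ z ↔ padicNorm p z ≤ (p : ℚ) ^ (-n : ℤ) := by
  rw [← Nat.cast_pow, padicNorm.dvd_iff_norm_le]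

theorem pow_dvd_num_iff_padicNorm_le {n : ℕ} (hn : 0 < n) (x : ℚ) :
    (p : ℤ) ^ n ∣ x.num ↔ padicNorm p x ≤ (p : ℚ) ^ (-n : ℤ) := by
  have hx : padicNorm p x = padicNorm p x.num / padicNorm p x.den := by
    rw [← padicNorm.div, Rat.num_div_den]
  by_cases hden : p ∣ x.den
  · have hnum : ¬ (p : ℤ) ∣ x.num := fun h =>
      Nat.Prime.not_dvd_one Fact.out
        (x.reduced ▸ Nat.dvd_gcd (Int.natCast_dvd.mp h) hden)
    have hgt : (p : ℚ) ^ (-n : ℤ) < padicNorm p x := by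
      rw [hx, (padicNorm.int_eq_one_iff _).mpr hnum]
      calc (p : ℚ) ^ (-n : ℤ) < 1 :=
            zpow_lt_one_of_neg₀ (by exact_mod_cast (Fact.out : p.Prime).one_lt) (by omega)
        _ ≤ 1 / padicNorm p x.den :=
            one_le_one_div ((padicNorm.nonneg _).lt_of_ne (padicNorm.nonzero (by positivity)).symm)
              (padicNorm.of_nat _)
    exact iff_of_false (fun h => hnum ((dvd_pow_self _ hn.ne').trans h)) hgt.not_ge
  · rw [hx, (padicNorm.nat_eq_one_iff _).mpr hden, div_one,
      pow_dvd_iff_padicNorm_le]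

theorem padicNorm_bernoulli_le_one {n : ℕ} (hn : ¬ (p - 1) ∣ n) :
    padicNorm p (bernoulli n) ≤ 1 := by
  have hp : p.Prime := Fact.out
  rcases n.even_or_odd' with ⟨k, rfl | rfl⟩
  · obtain ⟨m, hm⟩ := Bernoulli.vonStaudt_clausen k
    have hsum : padicNorm p (∑ q ∈ range (2 * k + 2) with q.Prime ∧ (q - 1) ∣ 2 * k,
        (1 : ℚ) / q) ≤ 1 := by
      refine padicNorm.sum_le' (fun q hq => ?_) zero_le_one
      obtain ⟨-, hq, hqk⟩ := mem_filter.mp hq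
      have hpq : ¬ p ∣ q := fun h => hn ((Nat.prime_dvd_prime_iff_eq hp hq).mp h ▸ hqk)
      rw [padicNorm.div, padicNorm.one, (padicNorm.nat_eq_one_iff q).mpr hpq, div_one]
    rw [eq_sub_of_add_eq hm.symm]
    exact padicNorm.sub.trans (max_le (padicNorm.of_int m) hsum)
  · rcases k.eq_zero_or_pos with rfl | hk
    · have hp2 : ¬ p ∣ 2 := fun h => hn (by
        rw [(Nat.prime_dvd_prime_iff_eq hp Nat.prime_two).mp h])
      have h2 : padicNorm p 2 = 1 := by exact_mod_cast (padicNorm.nat_eq_one_iff 2).mpr hp2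
      rw [bernoulli_one, padicNorm.div, padicNorm.neg, padicNorm.one, h2, div_one]
    · rw [bernoulli_eq_zero_of_odd (odd_two_mul_add_one k) (by omega), padicNorm.zero]
      exact zero_le_one

theorem sum_range_pow_pred_sub_mul_bernoulli {n : ℕ} (hn : 0 < n) :
    ∑ a ∈ range n, (a : ℚ) ^ (n - 1) - n * bernoulli (n - 1) =
      ∑ i ∈ range (n - 1), bernoulli i * ((n.choose i * n ^ (n - 1 - i) : ℕ) : ℚ) := by
  obtain ⟨k, rfl⟩ := Nat.exists_eq_add_one_of_ne_zero hn.ne'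
  have hk : ((k : ℚ) + 1) ≠ 0 := by positivity
  have hlast : bernoulli k * ((k + 1).choose k) * ((k + 1 : ℕ) : ℚ) ^ (k + 1 - k) / (k + 1) =
      ((k + 1 : ℕ) : ℚ) * bernoulli k := by
    rw [Nat.choose_succ_self_right, Nat.add_sub_cancel_left]
    push_cast
    field_simp
  rw [Nat.add_sub_cancel, sum_range_pow, sum_range_succ, hlast, add_sub_cancel_right]
  refine sum_congr rfl fun i hi => ?_
  rw [show k + 1 - i = (k - i) + 1 by have := mem_range.mp hi; omega, pow_succ]
  push_cast
  field_simp

theorem pow_three_dvd_choose_mul_pow (h3 : 3 < p) {i : ℕ} (hi : i + 3 ≤ p) :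
    p ^ 3 ∣ p.choose i * p ^ (p - 1 - i) := by
  rcases i.eq_zero_or_pos with rfl | hi0
  · simpa using pow_dvd_pow p (by omega : 3 ≤ p - 1)
  · rw [pow_succ', show p - 1 - i = 2 + (p - 3 - i) by omega, pow_add]
    exact mul_dvd_mul (Nat.Prime.dvd_choose_self Fact.out hi0.ne' (by omega))
      (dvd_mul_right _ _)

theorem padicNorm_sum_range_pow_sub_mul_bernoulli_le (h3 : 3 < p) :
    padicNorm p (∑ a ∈ range p, (a : ℚ) ^ (p - 1) - p * bernoulli (p - 1)) ≤
      (p : ℚ) ^ (-3 : ℤ) := by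
  have hp : p.Prime := Fact.out
  rw [sum_range_pow_pred_sub_mul_bernoulli hp.pos]
  refine padicNorm.sum_le' (fun i hi => ?_) (by positivity)
  rcases (show i = p - 2 ∨ i + 3 ≤ p by have := mem_range.mp hi; omega) with rfl | hi3
  · have hodd : Odd (p - 2) := Nat.Odd.sub_even (by omega) (hp.odd_of_ne_two (by omega)) even_two
    rw [bernoulli_eq_zero_of_odd hodd (by omega), zero_mul, padicNorm.zero]
    positivity
  have hB : padicNorm p (bernoulli i) ≤ 1 := by
    rcases i.eq_zero_or_pos with rfl | hi0
    · simp
    · exact padicNorm_bernoulli_le_one fun h => by have := Nat.le_of_dvd hi0 h; omega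
  have hN : padicNorm p ((p.choose i * p ^ (p - 1 - i) : ℕ) : ℚ) ≤ (p : ℚ) ^ (-3 : ℤ) :=
    mod_cast (pow_dvd_iff_padicNorm_le _).mp
      (Int.natCast_dvd_natCast.mpr (pow_three_dvd_choose_mul_pow h3 hi3))
  rw [padicNorm.mul, ← one_mul ((p : ℚ) ^ (-3 : ℤ))]
  exact mul_le_mul hB hN (padicNorm.nonneg _) zero_le_one

end LerchPrime

open LerchPrime

theorem lerch_prime_test (p : ℕ) (hp : p.Prime) (h3 : 3 < p) :
    (((p : ℤ) ^ 3) ∣ (∑ a ∈ Finset.Icc 1 (p - 1), (a : ℤ) ^ (p - 1)) - p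
        - ((p - 1).factorial : ℤ)) ↔
      ((p : ℤ) ^ 3) ∣
        ((p : ℚ) * bernoulli (p - 1) - p - ((p - 1).factorial : ℚ)).num := by
  have : Fact p.Prime := ⟨hp⟩
  have hsum :
      ∑ a ∈ Icc 1 (p - 1), (a : ℚ) ^ (p - 1) = ∑ a ∈ range p, (a : ℚ) ^ (p - 1) := by
    rw [Icc_sub_one_right_eq_Ico_of_not_isMin (by simpa using hp.ne_zero),
      sum_range_eq_add_Ico _ hp.pos, Nat.cast_zero, zero_pow (by omega), zero_add]
  rw [pow_dvd_iff_padicNorm_le, pow_dvd_num_iff_padicNorm_le three_pos, Nat.cast_ofNat]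
  refine padicNorm_le_iff_of_padicNorm_sub_le ?_
  convert padicNorm_sum_range_pow_sub_mul_bernoulli_le h3 using 2
  push_cast
  rw [hsum]
  ring
end

section
/- For every prime p ≥ 5, the Wilson quotient w_p = ((p-1)! + 1)/p is coprime to 6 (i.e., divisible by neither 2 nor 3). -/
theorem wilson_quotient_coprime_six (p : ℕ) (hp : p.Prime) (h5 : 5 ≤ p) :
    Nat.Coprime (((p - 1).factorial + 1) / p) 6 := by
  haveI : Fact p.Prime := ⟨hp⟩
  have hpdvd : p ∣ (p - 1).factorial + 1 := by
    have := ZMod.wilsons_lemma p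
    have : ((p - 1).factorial + 1 : ZMod p) = 0 := by rw [this]; ring
    exact_mod_cast (ZMod.natCast_eq_zero_iff _ _).mp (by exact_mod_cast this)
  set w := ((p - 1).factorial + 1) / p with hw
  have hmul : p * w = (p - 1).factorial + 1 := Nat.mul_div_cancel' hpdvd
  have hdvd : ∀ q : ℕ, q ≤ p - 1 → 0 < q → q ∣ (p - 1).factorial := fun q hq hq0 =>
    Nat.dvd_factorial hq0 hq
  have hnot : ∀ q : ℕ, 2 ≤ q → q ≤ p - 1 → ¬ q ∣ w := by
    intro q h2 hle hqw
    have h1 : q ∣ (p - 1).factorial := hdvd q hle (by omega)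
    have h2' : q ∣ (p - 1).factorial + 1 := hmul ▸ Dvd.dvd.mul_left hqw p
    have : q ∣ 1 := (Nat.dvd_add_right h1).mp h2'
    have := Nat.le_of_dvd one_pos this
    omega
  have c2 : Nat.Coprime w 2 :=
    ((Nat.Prime.coprime_iff_not_dvd Nat.prime_two).mpr (hnot 2 le_rfl (by omega))).symm
  have c3 : Nat.Coprime w 3 :=
    ((Nat.Prime.coprime_iff_not_dvd Nat.prime_three).mpr (hnot 3 (by omega) (by omega))).symm
  have : Nat.Coprime w (2 * 3) := Nat.Coprime.mul_right c2 c3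
  simpa using this
end

section
/- For every non-Wilson prime p > 3, the Fermat-Wilson quotient g_p = (w_p^(p-1) − 1)/p is divisible by 24. -/
theorem fermat_wilson_quotient_div_24 (p : ℕ) (hp : p.Prime) (h3 : 3 < p)
    (hnw : ¬ p ^ 2 ∣ (p - 1).factorial + 1) :
    (24 : ℤ) ∣ (((((p - 1).factorial : ℤ) + 1) / p) ^ (p - 1) - 1) / p := by
  haveI : Fact p.Prime := ⟨hp⟩
  -- Wilson: p ∣ (p-1)! + 1
  have hwilN : p ∣ (p - 1).factorial + 1 := by
    have h0 : (((p - 1).factorial + 1 : ℕ) : ZMod p) = 0 := by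
      push_cast [ZMod.wilsons_lemma]; ring
    exact (ZMod.natCast_eq_zero_iff _ p).mp h0
  have hwil : (p : ℤ) ∣ ((p - 1).factorial : ℤ) + 1 := by exact_mod_cast hwilN
  set w : ℤ := (((p - 1).factorial : ℤ) + 1) / p with hw
  have hpw : (p : ℤ) * w = ((p - 1).factorial : ℤ) + 1 := Int.mul_ediv_cancel' hwil
  have hp0 : (0:ℤ) < p := by exact_mod_cast hp.pos
  -- p does not divide w
  have hndvd : ¬ (p : ℤ) ∣ w := by
    intro ⟨c, hc⟩
    apply hnw
    have : ((p:ℤ))^2 ∣ ((p - 1).factorial : ℤ) + 1 := ⟨c, by rw [← hpw, hc]; ring⟩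
    exact_mod_cast this
  -- w is odd
  have hfac2 : (2:ℕ) ∣ (p-1).factorial := Nat.dvd_factorial (by norm_num) (by omega)
  have hfac3 : (3:ℕ) ∣ (p-1).factorial := Nat.dvd_factorial (by norm_num) (by omega)
  have hpodd : Odd (p:ℤ) := by
    have := hp.odd_of_ne_two (by omega)
    exact_mod_cast this
  have hwodd : Odd w := by
    have h1 : Odd (((p - 1).factorial : ℤ) + 1) := by
      rcases hfac2 with ⟨k, hk⟩
      exact ⟨k, by push_cast [hk]; ring⟩
    rcases (Int.odd_mul.mp (hpw ▸ h1)) with ⟨_, h⟩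
    exact h
  -- 3 does not divide w
  have hw3 : ¬ (3:ℤ) ∣ w := by
    intro ⟨c, hc⟩
    rcases hfac3 with ⟨k, hk⟩
    have h1 : (p:ℤ) * (3*c) = 3*(k:ℤ) + 1 := by rw [← hc, hpw, hk]; push_cast; ring
    have h2 : (3:ℤ) ∣ 3*(k:ℤ) + 1 := h1 ▸ ⟨(p:ℤ)*c, by ring⟩
    omega
  -- 8 ∣ w^2 - 1
  have h8 : (8:ℤ) ∣ w^2 - 1 := by
    rcases hwodd with ⟨k, hk⟩
    rcases Int.even_mul_succ_self k with ⟨m, hm⟩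
    exact ⟨m, by rw [hk]; nlinarith⟩
  -- 3 ∣ w^2 - 1
  have h3' : (3:ℤ) ∣ w^2 - 1 := by
    have hz : (w : ZMod 3) ≠ 0 := by
      intro h
      exact hw3 (by exact_mod_cast (ZMod.intCast_zmod_eq_zero_iff_dvd w 3).mp h)
    have := ZMod.pow_card_sub_one_eq_one hz
    have h2 : ((w^2 - 1 : ℤ) : ZMod 3) = 0 := by
      push_cast
      simpa using sub_eq_zero_of_eq this
    exact (ZMod.intCast_zmod_eq_zero_iff_dvd _ 3).mp h2
  -- 24 ∣ w^(p-1) - 1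
  obtain ⟨k, hk⟩ : ∃ k, p - 1 = 2 * k := by
    rcases hp.odd_of_ne_two (by omega) with ⟨k, hk⟩
    exact ⟨k, by omega⟩
  have hdvd2 : w^2 - 1 ∣ w^(p-1) - 1 := by
    have := sub_dvd_pow_sub_pow (w^2) 1 k
    simpa [hk, pow_mul] using this
  have h24 : (24:ℤ) ∣ w^(p-1) - 1 := by
    have h8' : (8:ℤ) ∣ w^(p-1) - 1 := h8.trans hdvd2
    have h3'' : (3:ℤ) ∣ w^(p-1) - 1 := h3'.trans hdvd2
    have : IsCoprime (8:ℤ) 3 := by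
      rw [Int.isCoprime_iff_gcd_eq_one]; decide
    have := this.mul_dvd h8' h3''
    simpa using this
  -- p ∣ w^(p-1) - 1 (Fermat)
  have hfermat : (p:ℤ) ∣ w^(p-1) - 1 := by
    have hz : (w : ZMod p) ≠ 0 := by
      intro h
      exact hndvd ((ZMod.intCast_zmod_eq_zero_iff_dvd w p).mp h)
    have := ZMod.pow_card_sub_one_eq_one hz
    have h2 : ((w^(p-1) - 1 : ℤ) : ZMod p) = 0 := by
      push_cast
      simpa using sub_eq_zero_of_eq this
    exact (ZMod.intCast_zmod_eq_zero_iff_dvd _ p).mp h2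
  -- combine
  have hcop : IsCoprime (24:ℤ) (p:ℤ) := by
    have hnd : ¬ p ∣ 24 := by
      intro h
      rw [show (24:ℕ) = 2^3*3 from rfl] at h
      rcases hp.dvd_mul.mp h with h' | h'
      · have := (Nat.prime_dvd_prime_iff_eq hp Nat.prime_two).mp (hp.dvd_of_dvd_pow h')
        omega
      · have := (Nat.prime_dvd_prime_iff_eq hp Nat.prime_three).mp h'
        omega
    have : Nat.Coprime 24 p := (hp.coprime_iff_not_dvd.mpr hnd).symm
    have := Nat.isCoprime_iff_coprime.mpr this
    exact_mod_cast this
  have hmul : (24 * (p:ℤ)) ∣ w^(p-1) - 1 := hcop.mul_dvd h24 hfermat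
  rcases hmul with ⟨c, hc⟩
  refine ⟨c, ?_⟩
  rw [hc]
  rw [mul_comm (24:ℤ) (p:ℤ), mul_assoc, Int.mul_ediv_cancel_left _ (by positivity)]
end
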